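/- arXiv:math/0401408 — 2 statements merged into one kernel-verified Lean document; each statement's English description precedes it below -/
import Mathlib

section
/- Let G = (V, E, r, s) be a finite directed graph with no sinks (s is surjective onto V... i.e., every vertex emits an edge), let each vertex v carry a compact metric space T_v, and let each edge e carry a map φ_e : T_{r(e)} → T_{s(e)} that is c-Lipschitz for a uniform constant 0 < c < 1. Then for every infinite path α = (α_1, α_2, …) in G (meaning r(α_i) = s(α_{i+1}) for all i), the intersection ⋂_{k∈ℕ} φ_{α_1} ∘ ⋯ ∘ φ_{α_k} (T_{r(α_k)}) is a singleton subset of T_{s(α_1)}. -/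
/-!
The sets `A_k = φ_{α 0} ∘ ⋯ ∘ φ_{α k} (T (r (α k)))` form a decreasing sequence of nonempty
compact sets, so their intersection is nonempty by Cantor's intersection theorem. The composed map
is `c^(k+1)`-Lipschitz and there are only finitely many spaces `T v`, each of finite diameter, so
`diam A_k = O(c^k) → 0` and the intersection has at most one point.
-/

/-- The composition `φ_{α 0} ∘ ⋯ ∘ φ_{α k} : T (r (α k)) → T (s (α 0))` along a
path `α` in a graph, where each edge `e` carries a map `φ e : T (r e) → T (s e)`. -/
def pathMap {V E : Type*} (T : V → Type*) (r s : E → V)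
    (φ : (e : E) → T (r e) → T (s e)) (α : ℕ → E)
    (h : ∀ i, r (α i) = s (α (i + 1))) : (k : ℕ) → T (r (α k)) → T (s (α 0))
  | 0 => φ (α 0)
  | (k + 1) => fun x =>
      pathMap T r s φ α h k (cast (congrArg T (h k)).symm (φ (α (k + 1)) x))

open Filter Topology Metric

theorem Metric.exists_iInter_eq_singleton_of_tendsto_diam {X : Type*} [MetricSpace X]
    {A : ℕ → Set X} (hanti : ∀ k, A (k + 1) ⊆ A k) (hne : ∀ k, (A k).Nonempty)
    (hcpt : ∀ k, IsCompact (A k)) (hdiam : Tendsto (fun k => diam (A k)) atTop (𝓝 0)) :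
    ∃ x, ⋂ k, A k = {x} := by
  obtain ⟨x, hx⟩ : (⋂ k, A k).Nonempty :=
    IsCompact.nonempty_iInter_of_sequence_nonempty_isCompact_isClosed A hanti hne (hcpt 0)
      fun k => (hcpt k).isClosed
  refine ⟨x, Set.eq_singleton_iff_nonempty_unique_mem.mpr ⟨⟨x, hx⟩, fun y hy => ?_⟩⟩
  have hle : ∀ k, dist y x ≤ diam (A k) := fun k =>
    dist_le_diam_of_mem (hcpt k).isBounded (Set.mem_iInter.mp hy k) (Set.mem_iInter.mp hx k)
  exact dist_le_zero.mp (ge_of_tendsto' hdiam hle)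

section PathMap

variable {V E : Type*} (T : V → Type*) (r s : E → V)
  (φ : (e : E) → T (r e) → T (s e)) (α : ℕ → E) (hα : ∀ i, r (α i) = s (α (i + 1)))

theorem range_pathMap_succ_subset (k : ℕ) :
    Set.range (pathMap T r s φ α hα (k + 1)) ⊆ Set.range (pathMap T r s φ α hα k) := by
  rintro _ ⟨x, rfl⟩
  exact ⟨_, rfl⟩

variable [∀ v, MetricSpace (T v)]

theorem isometry_cast_congrArg {v w : V} (h : v = w) : Isometry (cast (congrArg T h)) := by
  subst h
  exact isometry_id

variable {T r s φ} {K : NNReal}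

theorem lipschitzWith_pathMap (hφ : ∀ e, LipschitzWith K (φ e)) (k : ℕ) :
    LipschitzWith (K ^ (k + 1)) (pathMap T r s φ α hα k) := by
  induction k with
  | zero =>
    rw [zero_add, pow_one]
    exact hφ (α 0)
  | succ k ih =>
    have hcomp := ih.comp ((isometry_cast_congrArg T (hα k).symm).lipschitz.comp (hφ _))
    rw [one_mul, ← pow_succ] at hcomp
    exact hcomp

variable [∀ v, CompactSpace (T v)]

theorem diam_range_pathMap_le (hφ : ∀ e, LipschitzWith K (φ e))
    {D : ℝ} (hD : ∀ v, diam (Set.univ : Set (T v)) ≤ D) (k : ℕ) :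
    diam (Set.range (pathMap T r s φ α hα k)) ≤ K ^ (k + 1) * D := by
  rw [← Set.image_univ]
  calc diam (pathMap T r s φ α hα k '' Set.univ)
      ≤ ↑(K ^ (k + 1)) * diam (Set.univ : Set (T (r (α k)))) :=
        (lipschitzWith_pathMap α hα hφ k).diam_image_le _ isCompact_univ.isBounded
    _ ≤ K ^ (k + 1) * D := by
        rw [NNReal.coe_pow]
        exact mul_le_mul_of_nonneg_left (hD _) (by positivity)

theorem tendsto_diam_range_pathMap [Finite V] (hφ : ∀ e, LipschitzWith K (φ e)) (hK : K < 1) :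
    Tendsto (fun k => diam (Set.range (pathMap T r s φ α hα k))) atTop (𝓝 0) := by
  obtain ⟨D, hD⟩ := (Set.finite_range fun v => diam (Set.univ : Set (T v))).bddAbove
  have hpow : Tendsto (fun k : ℕ => (K : ℝ) ^ (k + 1) * D) atTop (𝓝 0) := by
    simpa using ((tendsto_pow_atTop_nhds_zero_of_lt_one K.coe_nonneg hK).comp
      (tendsto_add_atTop_nat 1)).mul_const D
  exact squeeze_zero (fun _ => diam_nonneg)
    (diam_range_pathMap_le α hα hφ fun v => hD (Set.mem_range_self v)) hpow

theorem exists_iInter_range_pathMap_eq_singleton [Finite V] [∀ v, Nonempty (T v)]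
    (hφ : ∀ e, LipschitzWith K (φ e)) (hK : K < 1) :
    ∃ x, ⋂ k, Set.range (pathMap T r s φ α hα k) = {x} :=
  exists_iInter_eq_singleton_of_tendsto_diam (range_pathMap_succ_subset T r s φ α hα)
    (fun _ => Set.range_nonempty _)
    (fun k => isCompact_range (lipschitzWith_pathMap α hα hφ k).continuous)
    (tendsto_diam_range_pathMap α hα hφ hK)

end PathMap

theorem stmt_2_general {V E : Type*} [Fintype V] (r s : E → V)
    (T : V → Type*) [∀ v, MetricSpace (T v)] [∀ v, CompactSpace (T v)]
    [∀ v, Nonempty (T v)]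
    (φ : (e : E) → T (r e) → T (s e)) (c : ℝ) (hc0 : 0 < c) (hc1 : c < 1)
    (hφ : ∀ (e : E) (x y : T (r e)), dist (φ e x) (φ e y) ≤ c * dist x y)
    (α : ℕ → E) (hα : ∀ i, r (α i) = s (α (i + 1))) :
    ∃ x : T (s (α 0)),
      (⋂ k, pathMap T r s φ α hα k '' (Set.univ : Set (T (r (α k))))) = {x} := by
  have hLip : ∀ e, LipschitzWith c.toNNReal (φ e) := fun e =>
    LipschitzWith.of_dist_le_mul fun x y => by
      rw [Real.coe_toNNReal c hc0.le]
      exact hφ e x y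
  simp only [Set.image_univ]
  exact exists_iInter_range_pathMap_eq_singleton α hα hLip (Real.toNNReal_lt_one.mpr hc1)

/-- In a Mauldin–Williams graph (finite directed graph with no sinks, compact metric
spaces `T v`, uniformly `c`-Lipschitz maps `φ e : T (r e) → T (s e)` with `0 < c < 1`),
for every infinite path `α` the intersection
`⋂ k, φ_{α 0} ∘ ⋯ ∘ φ_{α k} '' (T (r (α k)))` is a singleton subset of `T (s (α 0))`. -/
theorem stmt_2 {V E : Type*} [Fintype V] [Fintype E] (r s : E → V)
    (hnosink : ∀ v : V, ∃ e : E, s e = v)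
    (T : V → Type*) [∀ v, MetricSpace (T v)] [∀ v, CompactSpace (T v)]
    [∀ v, Nonempty (T v)]
    (φ : (e : E) → T (r e) → T (s e)) (c : ℝ) (hc0 : 0 < c) (hc1 : c < 1)
    (hφ : ∀ (e : E) (x y : T (r e)), dist (φ e x) (φ e y) ≤ c * dist x y)
    (α : ℕ → E) (hα : ∀ i, r (α i) = s (α (i + 1))) :
    ∃ x : T (s (α 0)),
      (⋂ k, pathMap T r s φ α hα k '' (Set.univ : Set (T (r (α k))))) = {x} :=
  stmt_2_general r s T φ c hc0 hc1 hφ α hα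
end

section
/- A Mauldin-Williams graph has a unique invariant list: given a finite directed graph G = (V, E, r, s) with no sinks, compact metric spaces (T_v, ρ_v), and uniformly c-Lipschitz maps φ_e : T_{r(e)} → T_{s(e)} with 0 < c < 1, there exists a unique family (K_v)_{v∈V} of nonempty compact sets with K_v ⊆ T_v such that K_v = ⋃_{e ∈ E, s(e) = v} φ_e(K_{r(e)}) for every v ∈ V. -/
open Set EMetric TopologicalSpace Function

/-- A Mauldin–Williams graph has a unique invariant list: given a finite directed
graph with no sinks, compact metric spaces `T v`, and uniformly `c`-Lipschitz maps
`φ e : T (r e) → T (s e)` with `0 < c < 1`, there is a unique family `(K v)` of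
nonempty compact sets with `K v = ⋃_{s e = v} φ e '' K (r e)` for every `v`. -/
theorem stmt_6 {V E : Type*} [Fintype V] [Fintype E] (r s : E → V)
    (hnosink : ∀ v : V, ∃ e : E, s e = v)
    (T : V → Type*) [∀ v, MetricSpace (T v)] [∀ v, CompactSpace (T v)]
    [∀ v, Nonempty (T v)]
    (φ : (e : E) → T (r e) → T (s e)) (c : ℝ) (hc0 : 0 < c) (hc1 : c < 1)
    (hφ : ∀ (e : E) (x y : T (r e)), dist (φ e x) (φ e y) ≤ c * dist x y) :
    ∃! K : (v : V) → Set (T v),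
      (∀ v, IsCompact (K v)) ∧ (∀ v, (K v).Nonempty) ∧
      ∀ v, K v = ⋃ (e : E), ⋃ (he : s e = v),
        (fun x => cast (congrArg T he) (φ e x)) '' K (r e) := by
  set cn : NNReal := ⟨c, hc0.le⟩ with hcn
  have hlip : ∀ e, LipschitzWith cn (φ e) := fun e =>
    LipschitzWith.of_dist_le_mul (fun x y => hφ e x y)
  have hlip' : ∀ (e : E) (v : V) (he : s e = v),
      LipschitzWith cn (fun x => cast (congrArg T he) (φ e x)) := by
    rintro e v rfl; exact hlip e
  -- the set-level map
  set F0 : ((v : V) → Set (T v)) → (v : V) → Set (T v) :=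
    fun K v => ⋃ (e : E), ⋃ (he : s e = v),
      (fun x => cast (congrArg T he) (φ e x)) '' K (r e) with hF0
  have hcomp : ∀ (K : (v : V) → Set (T v)), (∀ v, IsCompact (K v)) →
      ∀ v, IsCompact (F0 K v) := by
    intro K hK v
    apply isCompact_iUnion; intro e
    apply isCompact_iUnion; intro he
    exact (hK (r e)).image (hlip' e v he).continuous
  have hnonempty : ∀ (K : (v : V) → Set (T v)), (∀ v, (K v).Nonempty) →
      ∀ v, (F0 K v).Nonempty := by
    intro K hK v
    obtain ⟨e, he⟩ := hnosink v
    obtain ⟨x, hx⟩ := hK (r e)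
    exact ⟨_, Set.mem_iUnion.2 ⟨e, Set.mem_iUnion.2 ⟨he, Set.mem_image_of_mem _ hx⟩⟩⟩
  -- the map on the complete metric space of families of nonempty compacts
  have : Nonempty ((v : V) → NonemptyCompacts (T v)) :=
    ⟨fun v => ⟨⟨Set.univ, isCompact_univ⟩, Set.univ_nonempty⟩⟩
  set F : ((v : V) → NonemptyCompacts (T v)) → (v : V) → NonemptyCompacts (T v) :=
    fun K v => ⟨⟨F0 (fun u => (K u : Set (T u))) v,
        hcomp _ (fun u => (K u).isCompact) v⟩,
      hnonempty _ (fun u => (K u).nonempty) v⟩ with hF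
  -- contraction estimate
  have key : ∀ (A B : (v : V) → NonemptyCompacts (T v)) (v : V),
      hausdorffEdist (F0 (fun u => (A u : Set (T u))) v)
        (F0 (fun u => (B u : Set (T u))) v) ≤ cn * edist A B := by
    have half : ∀ (A B : (v : V) → NonemptyCompacts (T v)) (v : V),
        ∀ x ∈ F0 (fun u => (A u : Set (T u))) v,
          infEdist x (F0 (fun u => (B u : Set (T u))) v) ≤ cn * edist A B := by
      intro A B v x hx
      simp only [hF0, Set.mem_iUnion] at hx
      obtain ⟨e, he, a, ha, rfl⟩ := hx
      obtain ⟨b, hb, hab⟩ :=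
        (B (r e)).isCompact.exists_infEdist_eq_edist (B (r e)).nonempty a
      calc infEdist (cast (congrArg T he) (φ e a))
            (F0 (fun u => (B u : Set (T u))) v)
          ≤ edist (cast (congrArg T he) (φ e a)) (cast (congrArg T he) (φ e b)) :=
            infEdist_le_edist_of_mem (by
              simp only [hF0, Set.mem_iUnion]
              exact ⟨e, he, b, hb, rfl⟩)
        _ ≤ cn * edist a b := hlip' e v he a b
        _ = cn * infEdist a (B (r e)) := by rw [← hab]; rfl
        _ ≤ cn * hausdorffEdist ((A (r e) : Set (T (r e)))) (B (r e)) :=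
            mul_le_mul_right (infEdist_le_hausdorffEdist_of_mem ha) _
        _ = cn * edist (A (r e)) (B (r e)) := rfl
        _ ≤ cn * edist A B := mul_le_mul_right (edist_le_pi_edist A B (r e)) _
    intro A B v
    refine hausdorffEdist_le_of_infEdist (half A B v) ?_
    intro x hx
    have := half B A v x hx
    rwa [edist_comm] at this
  have hFlip : LipschitzWith cn F := by
    intro A B
    rw [edist_pi_def, Finset.sup_le_iff]
    intro v _
    exact key A B v
  have hcontr : ContractingWith cn F := ⟨by exact_mod_cast hc1, hFlip⟩
  set L := hcontr.fixedPoint F with hL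
  have hLfix : Function.IsFixedPt F L := hcontr.fixedPoint_isFixedPt
  refine ⟨fun v => (L v : Set (T v)), ⟨fun v => (L v).isCompact,
    fun v => (L v).nonempty, fun v => ?_⟩, ?_⟩
  · have := congrFun hLfix v
    have h2 : (F L v : Set (T v)) = (L v : Set (T v)) := by rw [this]
    exact h2.symm
  · rintro K ⟨h1, h2, h3⟩
    set M : (v : V) → NonemptyCompacts (T v) := fun v => ⟨⟨K v, h1 v⟩, h2 v⟩ with hM
    have hMfix : Function.IsFixedPt F M := by
      funext v
      apply NonemptyCompacts.ext
      exact (h3 v).symm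
    have : M = L := hcontr.fixedPoint_unique hMfix
    funext v
    exact congrArg (fun N => (N v : Set (T v))) this
end
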